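/- Let m ∈ ℝ and let G : ℝ → [0,∞) be a measurable function that is monotone nondecreasing on [m, ∞). Then for all 0 < s₁ ≤ s₂, ∫_m^∞ G(x)·φ(x; m, s₁²) dx ≤ ∫_m^∞ G(x)·φ(x; m, s₂²) dx, where φ(x; m, s²) = (2πs²)^(−1/2)·exp(−(x−m)²/(2s²)) is the normal density with mean m and variance s². (This is the step allowing the variance of the Laplace approximation to be replaced by the upper bound μ̂²/(2k) in the total variation bound of Appendix D.) -/

import Mathlib

/-! Substituting `x = m + s u` turns `∫_m^∞ G(x) φ(x; m, s²) dx` into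
`∫_0^∞ G(m + s u) φ(u; 0, 1) du`, the Jacobian `s` cancelling the factor `1/s` of
`φ(m + s u; m, s²)`. For `u > 0` the point `m + s u` moves to the right as `s`
grows, so the monotonicity of `G` on `[m, ∞)` gives the inequality pointwise. -/

open MeasureTheory Real

/-- The density of the normal distribution with mean `μ` and variance `s2`:
`φ(x; μ, s²) = (2πs²)^(−1/2)·exp(−(x−μ)²/(2s²))`. -/
noncomputable def normalPDF (μ s2 x : ℝ) : ℝ :=
  (2 * Real.pi * s2) ^ (-(1:ℝ)/2) * Real.exp (-(x - μ) ^ 2 / (2 * s2))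

open Set

lemma setLIntegral_Ioi_eq_setLIntegral_Ioi_zero_comp_affine (m : ℝ) {s : ℝ} (hs : 0 < s)
    (g : ℝ → ENNReal) :
    ∫⁻ x in Ioi m, g x = ∫⁻ u in Ioi 0, ENNReal.ofReal s * g (m + s * u) := by
  have himage : (fun u => m + s * u) '' Ioi 0 = Ioi m := by
    rw [← image_image (m + ·) (s * ·), image_mul_left_Ioi hs, mul_zero, image_const_add_Ioi,
      add_zero]
  have hderiv : ∀ u ∈ Ioi (0 : ℝ), HasDerivWithinAt (fun u => m + s * u) s (Ioi 0) u :=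
    fun u _ => ((hasDerivAt_id u).const_mul s |>.const_add m).hasDerivWithinAt.congr_deriv
      (mul_one s)
  have hinj : InjOn (fun u => m + s * u) (Ioi 0) := fun u _ v _ h => by
    simpa [hs.ne'] using h
  rw [← himage, lintegral_image_eq_lintegral_abs_deriv_mul measurableSet_Ioi hderiv hinj,
    abs_of_pos hs]

lemma mul_normalPDF_affine (μ : ℝ) {s : ℝ} (hs : 0 < s) (u : ℝ) :
    s * normalPDF μ (s ^ 2) (μ + s * u) = normalPDF 0 1 u := by
  have hscale : (2 * π * s ^ 2) ^ (-(1:ℝ)/2) = (2 * π) ^ (-(1:ℝ)/2) * s⁻¹ := by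
    rw [mul_rpow (by positivity) (by positivity), neg_div, rpow_neg (sq_nonneg s),
      ← sqrt_eq_rpow, sqrt_sq hs.le]
  have hexp : -(μ + s * u - μ) ^ 2 / (2 * s ^ 2) = -(u - 0) ^ 2 / (2 * 1) := by
    field_simp
    ring
  rw [normalPDF, normalPDF, hscale, hexp]
  field_simp

lemma setLIntegral_Ioi_mul_normalPDF_eq_standard (m : ℝ) {s : ℝ} (hs : 0 < s) (G : ℝ → ℝ) :
    ∫⁻ x in Ioi m, ENNReal.ofReal (G x * normalPDF m (s ^ 2) x) =
      ∫⁻ u in Ioi 0, ENNReal.ofReal (G (m + s * u) * normalPDF 0 1 u) := by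
  rw [setLIntegral_Ioi_eq_setLIntegral_Ioi_zero_comp_affine m hs]
  congr 1
  ext u
  rw [← ENNReal.ofReal_mul hs.le, ← mul_normalPDF_affine m hs u, mul_left_comm]

theorem stmt13_general (m : ℝ) (G : ℝ → ℝ)
    (hGmono : MonotoneOn G (Set.Ici m)) (s₁ s₂ : ℝ) (h1 : 0 < s₁) (h12 : s₁ ≤ s₂) :
    ∫⁻ x in Set.Ioi m, ENNReal.ofReal (G x * normalPDF m (s₁ ^ 2) x) ≤
      ∫⁻ x in Set.Ioi m, ENNReal.ofReal (G x * normalPDF m (s₂ ^ 2) x) := by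
  rw [setLIntegral_Ioi_mul_normalPDF_eq_standard m h1,
    setLIntegral_Ioi_mul_normalPDF_eq_standard m (h1.trans_le h12)]
  refine setLIntegral_mono' measurableSet_Ioi fun u (hu : 0 < u) => ?_
  have hshift : s₁ * u ≤ s₂ * u := mul_le_mul_of_nonneg_right h12 hu.le
  have hstart : m ≤ m + s₁ * u := le_add_of_nonneg_right (mul_nonneg h1.le hu.le)
  have hpdf : 0 ≤ normalPDF 0 1 u := by unfold normalPDF; positivity
  gcongr
  exact hGmono hstart (hstart.trans (by linarith)) (by linarith)

/-- If `G ≥ 0` is measurable and monotone nondecreasing on `[m, ∞)`, then for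
`0 < s₁ ≤ s₂`, `∫_m^∞ G(x)·φ(x; m, s₁²) dx ≤ ∫_m^∞ G(x)·φ(x; m, s₂²) dx`
(as an inequality of extended-real-valued Lebesgue integrals). -/
theorem stmt13 (m : ℝ) (G : ℝ → ℝ) (hG : Measurable G) (hG0 : ∀ x, 0 ≤ G x)
    (hGmono : MonotoneOn G (Set.Ici m)) (s₁ s₂ : ℝ) (h1 : 0 < s₁) (h12 : s₁ ≤ s₂) :
    ∫⁻ x in Set.Ioi m, ENNReal.ofReal (G x * normalPDF m (s₁ ^ 2) x) ≤
      ∫⁻ x in Set.Ioi m, ENNReal.ofReal (G x * normalPDF m (s₂ ^ 2) x) :=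
  stmt13_general m G hGmono s₁ s₂ h1 h12
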